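/- arXiv:1510.00251 — 3 statements merged into one kernel-verified Lean document; each statement's English description precedes it below -/
import Mathlib

section
/- (Partition principle.) Let $N \in \mathbb{N}$ and let $[0,1]^d = \bigcup_{i=1}^N \Omega_i$ be a partition into Lebesgue-measurable sets with $|\Omega_i| = 1/N$ for every $i$. Let $\mathcal{P}_\Omega$ be the random point set obtained by choosing one point independently from each $\Omega_i$ according to normalized Lebesgue measure on $\Omega_i$, and let $\mathcal{P}_N$ be a set of $N$ points chosen independently and uniformly at random from $[0,1]^d$. Then $\mathbb{E}\, \mathcal{L}_2(\mathcal{P}_\Omega)^2 \le \mathbb{E}\, \mathcal{L}_2(\mathcal{P}_N)^2$. -/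
open MeasureTheory
open scoped ENNReal

/-- The uniform probability measure on a subset of `ℝ^d`
(Lebesgue measure restricted to the set and normalized). -/
noncomputable def uMeas {d : ℕ} (s : Set (Fin d → ℝ)) : Measure (Fin d → ℝ) :=
  (volume s)⁻¹ • volume.restrict s

/-- The unit cube `[0,1]^d`. -/
def unitCube (d : ℕ) : Set (Fin d → ℝ) := Set.univ.pi fun _ => Set.Icc (0:ℝ) 1

/-- The anchored box `[0,x] = ∏_j [0, x_j]`. -/
def box {d : ℕ} (x : Fin d → ℝ) : Set (Fin d → ℝ) := Set.univ.pi fun j => Set.Icc 0 (x j)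

open Classical in
/-- The squared `L²`-discrepancy of a finite point configuration in `[0,1]^d`. -/
noncomputable def L2sq {ι : Type*} [Fintype ι] {d : ℕ} (P : ι → (Fin d → ℝ)) : ℝ :=
  ∫ x in unitCube d,
    |((Finset.univ.filter fun i => P i ∈ box x).card : ℝ) / (Fintype.card ι : ℝ) -
      (volume (box x)).toReal| ^ 2

/-!
By Fubini, both expectations are integrals over `x ∈ [0,1]^d` of `E[Δ(x)²]`, where `Δ(x)` is the
local discrepancy at `x`, so it suffices to compare them for fixed `x`. For independent points with
laws `μᵢ`, the number of points in `[0,x]` is a sum of independent Bernoulli variables with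
parameters `pᵢ = μᵢ([0,x])`, hence `N² E[Δ(x)²] = ∑ (pᵢ - pᵢ²) + (∑ pᵢ - N |[0,x]|)²`.
Jittered and i.i.d. uniform sampling have the same `∑ pᵢ`, and by Cauchy–Schwarz `∑ pᵢ²` is
smallest when all `pᵢ` are equal, as they are for i.i.d. sampling.
-/

open ProbabilityTheory

section Bernoulli

variable {Ω : Type*} [MeasurableSpace Ω]

lemma integral_sub_sq_eq_variance_add {μ : Measure Ω} [IsProbabilityMeasure μ] {Z : Ω → ℝ}
    (hZ : MemLp Z 2 μ) (c : ℝ) :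
    ∫ ω, (Z ω - c) ^ 2 ∂μ = Var[Z; μ] + (μ[Z] - c) ^ 2 := by
  have hZc : MemLp (fun ω ↦ Z ω - c) 2 μ := hZ.sub (memLp_const c)
  rw [← variance_sub_const hZ.aestronglyMeasurable c, variance_eq_sub hZc,
    integral_sub (hZ.integrable one_le_two) (integrable_const c)]
  simp

lemma variance_indicator_one {μ : Measure Ω} [IsProbabilityMeasure μ] {s : Set Ω}
    (hs : MeasurableSet s) :
    Var[s.indicator 1; μ] = μ.real s - μ.real s ^ 2 := by
  have hmem : MemLp (s.indicator (1 : Ω → ℝ)) 2 μ :=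
    (memLp_const 1).indicator hs
  rw [variance_eq_sub hmem]
  have hsq : s.indicator (1 : Ω → ℝ) ^ 2 = s.indicator 1 := by
    ext ω; by_cases h : ω ∈ s <;> simp [h]
  rw [hsq, integral_indicator_one hs]

variable {ι α : Type*} [Fintype ι] [MeasurableSpace α]

lemma integral_sum_indicator_sub_sq_pi (μ : ι → Measure α) [∀ i, IsProbabilityMeasure (μ i)]
    {s : Set α} (hs : MeasurableSet s) (c : ℝ) :
    ∫ P, (∑ i, s.indicator 1 (P i) - c) ^ 2 ∂Measure.pi μ =
      ∑ i, ((μ i).real s - (μ i).real s ^ 2) + (∑ i, (μ i).real s - c) ^ 2 := by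
  set X : ι → (ι → α) → ℝ := fun i P ↦ s.indicator 1 (P i)
  have hX : ∀ i, MemLp (X i) 2 (Measure.pi μ) := fun i ↦
    (((memLp_const (1 : ℝ)).indicator hs).comp_measurePreserving (measurePreserving_eval μ i) :)
  have hindep : iIndepFun X (Measure.pi μ) :=
    iIndepFun_pi fun i ↦ (measurable_const.indicator hs).aemeasurable
  have hsum : ∀ P, ∑ i, s.indicator 1 (P i) = (∑ i, X i) P := fun P ↦ by simp [X]
  simp only [hsum]
  rw [integral_sub_sq_eq_variance_add (memLp_finsetSum' Finset.univ fun i _ ↦ hX i),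
    IndepFun.variance_sum (fun i _ ↦ hX i) fun i _ j _ hij ↦ hindep.indepFun hij,
    Finset.sum_fn, integral_finsetSum _ fun i _ ↦ (hX i).integrable one_le_two]
  congr 1
  · refine Finset.sum_congr rfl fun i _ ↦ ?_
    exact ((measurePreserving_eval μ i).variance_fun_comp
      (measurable_const.indicator hs).aemeasurable).trans (variance_indicator_one hs)
  · congr 2
    refine Finset.sum_congr rfl fun i _ ↦ ?_
    rw [← integral_indicator_one hs, ← (measurePreserving_eval μ i).map_eq,
      integral_map (measurable_pi_apply i).aemeasurable
        (measurable_const.indicator hs).aestronglyMeasurable]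

end Bernoulli

section Partition

variable {ι α : Type*} [Fintype ι] [MeasurableSpace α]

lemma sum_cond_apply_eq_card_mul {μ : Measure α} {Ω : ι → Set α} {s : Set α}
    (hmeas : ∀ i, MeasurableSet (Ω i)) (hdisj : Pairwise (Function.onFun Disjoint Ω))
    (hcover : ⋃ i, Ω i = s) {c : ℝ≥0∞} (hc₀ : c ≠ 0) (hvol : ∀ i, μ (Ω i) = c)
    {t : Set α} (ht : MeasurableSet t) :
    ∑ i, μ[t | Ω i] = Fintype.card ι * μ[t | s] := by
  have hs : μ s = Fintype.card ι * c := by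
    rw [← hcover, measure_iUnion hdisj hmeas, tsum_fintype]
    simp [hvol]
  have hst : μ (s ∩ t) = ∑ i, μ (Ω i ∩ t) := by
    rw [← hcover, Set.iUnion_inter, measure_iUnion _ fun i ↦ (hmeas i).inter ht, tsum_fintype]
    exact fun i j hij ↦ (hdisj hij).mono Set.inter_subset_left Set.inter_subset_left
  rcases isEmpty_or_nonempty ι with _ | _
  · simp
  have hN : (Fintype.card ι : ℝ≥0∞) ≠ 0 := by simp
  simp only [cond_apply' ht, hvol, hs, hst, ← Finset.mul_sum]
  rw [ENNReal.mul_inv (Or.inl hN) (Or.inr hc₀), ← mul_assoc, ← mul_assoc,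
    ENNReal.mul_inv_cancel hN (ENNReal.natCast_ne_top _), one_mul]

end Partition

section Discrepancy

variable {ι : Type*} [Fintype ι] {d : ℕ}

lemma uMeas_eq_cond (s : Set (Fin d → ℝ)) : uMeas s = volume[|s] := rfl

lemma measurableSet_unitCube : MeasurableSet (unitCube d) :=
  MeasurableSet.univ_pi fun _ ↦ measurableSet_Icc

lemma volume_unitCube : volume (unitCube d) = 1 := by
  rw [unitCube, volume_pi_pi]
  simp [Real.volume_Icc]

lemma box_eq_Icc (x : Fin d → ℝ) : box x = Set.Icc 0 x := Set.pi_univ_Icc 0 x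

lemma measurableSet_box (x : Fin d → ℝ) : MeasurableSet (box x) :=
  box_eq_Icc x ▸ measurableSet_Icc

lemma box_subset_unitCube {x : Fin d → ℝ} (hx : x ∈ unitCube d) : box x ⊆ unitCube d :=
  fun _ hy j _ ↦ ⟨(hy j trivial).1, (hy j trivial).2.trans (hx j trivial).2⟩

noncomputable def localDiscrepancy (P : ι → Fin d → ℝ) (x : Fin d → ℝ) : ℝ :=
  (∑ i, (box x).indicator 1 (P i)) / Fintype.card ι - volume.real (box x)

lemma L2sq_eq_setIntegral_localDiscrepancy_sq (P : ι → Fin d → ℝ) :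
    L2sq P = ∫ x in unitCube d, localDiscrepancy P x ^ 2 := by
  classical
  refine setIntegral_congr_fun measurableSet_unitCube fun x _ ↦ ?_
  rw [sq_abs, localDiscrepancy, measureReal_def, Finset.card_filter]
  simp [Set.indicator_apply]

lemma measurable_localDiscrepancy_uncurry :
    Measurable fun z : (ι → Fin d → ℝ) × (Fin d → ℝ) ↦ localDiscrepancy z.1 z.2 := by
  have hcount : ∀ i, Measurable fun z : (ι → Fin d → ℝ) × (Fin d → ℝ) ↦
      (box z.2).indicator (1 : (Fin d → ℝ) → ℝ) (z.1 i) := by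
    intro i
    have hbox : MeasurableSet {z : (ι → Fin d → ℝ) × (Fin d → ℝ) | z.1 i ∈ box z.2} := by
      simp only [box_eq_Icc, Set.mem_Icc, Set.ofPred_and]
      exact (measurableSet_le measurable_const (by fun_prop)).inter
        (measurableSet_le (by fun_prop) (by fun_prop))
    exact measurable_const.indicator hbox
  have hvol : Measurable fun x : Fin d → ℝ ↦ volume.real (box x) := by
    simp only [measureReal_def, box_eq_Icc, Real.volume_Icc_pi]
    fun_prop
  exact ((Finset.measurable_sum _ fun i _ ↦ hcount i).div_const _).sub
    (hvol.comp measurable_snd)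

lemma abs_localDiscrepancy_le_one (P : ι → Fin d → ℝ) {x : Fin d → ℝ} (hx : x ∈ unitCube d) :
    |localDiscrepancy P x| ≤ 1 := by
  have hcount : (∑ i, (box x).indicator 1 (P i)) / (Fintype.card ι : ℝ) ∈ Set.Icc 0 1 := by
    have h01 : ∀ i, (box x).indicator (1 : (Fin d → ℝ) → ℝ) (P i) ∈ Set.Icc 0 1 := fun i ↦ by
      by_cases h : P i ∈ box x <;> simp [h]
    have hle : ∑ i, (box x).indicator (1 : (Fin d → ℝ) → ℝ) (P i) ≤ Fintype.card ι := by
      calc ∑ i, (box x).indicator (1 : (Fin d → ℝ) → ℝ) (P i) ≤ ∑ _i : ι, (1 : ℝ) :=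
            Finset.sum_le_sum fun i _ ↦ (h01 i).2
        _ = Fintype.card ι := by simp
    exact ⟨div_nonneg (Finset.sum_nonneg fun i _ ↦ (h01 i).1) (Nat.cast_nonneg _),
      div_le_one_of_le₀ hle (Nat.cast_nonneg _)⟩
  have hvol : volume.real (box x) ∈ Set.Icc (0 : ℝ) 1 := by
    refine ⟨measureReal_nonneg, ?_⟩
    have := measureReal_mono (μ := volume) (box_subset_unitCube hx) (by simp [volume_unitCube])
    simpa [measureReal_def, volume_unitCube] using this
  rw [localDiscrepancy, abs_le]
  constructor <;> linarith [hcount.1, hcount.2, hvol.1, hvol.2]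

lemma integrable_localDiscrepancy_sq_uncurry (π : Measure (ι → Fin d → ℝ)) [IsFiniteMeasure π] :
    Integrable (fun z : (ι → Fin d → ℝ) × (Fin d → ℝ) ↦ localDiscrepancy z.1 z.2 ^ 2)
      (π.prod (volume.restrict (unitCube d))) := by
  rw [← Measure.restrict_univ (μ := π), Measure.prod_restrict]
  refine Measure.integrableOn_of_bounded (M := 1) ?_
    (measurable_localDiscrepancy_uncurry.pow_const 2).aestronglyMeasurable ?_
  · simp [Measure.prod_prod, volume_unitCube]
  · refine ae_restrict_of_forall_mem (MeasurableSet.univ.prod measurableSet_unitCube) ?_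
    rintro ⟨P, x⟩ ⟨-, hx⟩
    simpa [abs_le] using abs_localDiscrepancy_le_one P hx

lemma integral_L2sq_eq_setIntegral_integral (π : Measure (ι → Fin d → ℝ)) [IsFiniteMeasure π] :
    ∫ P, L2sq P ∂π = ∫ x in unitCube d, ∫ P, localDiscrepancy P x ^ 2 ∂π := by
  simp_rw [L2sq_eq_setIntegral_localDiscrepancy_sq]
  exact integral_integral_swap (integrable_localDiscrepancy_sq_uncurry π)

lemma integral_L2sq_mono {π π' : Measure (ι → Fin d → ℝ)} [IsFiniteMeasure π] [IsFiniteMeasure π']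
    (h : ∀ x, ∫ P, localDiscrepancy P x ^ 2 ∂π ≤ ∫ P, localDiscrepancy P x ^ 2 ∂π') :
    ∫ P, L2sq P ∂π ≤ ∫ P, L2sq P ∂π' := by
  rw [integral_L2sq_eq_setIntegral_integral, integral_L2sq_eq_setIntegral_integral]
  exact integral_mono (integrable_localDiscrepancy_sq_uncurry π).integral_prod_right
    (integrable_localDiscrepancy_sq_uncurry π').integral_prod_right h

variable [Nonempty ι]

lemma integral_localDiscrepancy_sq_pi (μ : ι → Measure (Fin d → ℝ))
    [∀ i, IsProbabilityMeasure (μ i)] (x : Fin d → ℝ) :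
    ∫ P, localDiscrepancy P x ^ 2 ∂Measure.pi μ =
      (∑ i, ((μ i).real (box x) - (μ i).real (box x) ^ 2) +
        (∑ i, (μ i).real (box x) - Fintype.card ι * volume.real (box x)) ^ 2) /
        (Fintype.card ι : ℝ) ^ 2 := by
  have hN : (Fintype.card ι : ℝ) ≠ 0 := by positivity
  have hsq : ∀ P : ι → Fin d → ℝ, localDiscrepancy P x ^ 2 =
      (∑ i, (box x).indicator 1 (P i) - Fintype.card ι * volume.real (box x)) ^ 2 /
        (Fintype.card ι : ℝ) ^ 2 := fun P ↦ by
    rw [localDiscrepancy]; field_simp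
  simp only [hsq]
  rw [integral_div, integral_sum_indicator_sub_sq_pi μ (measurableSet_box x)]

lemma integral_localDiscrepancy_sq_pi_le (μ : ι → Measure (Fin d → ℝ))
    [∀ i, IsProbabilityMeasure (μ i)] (ν : Measure (Fin d → ℝ)) [IsProbabilityMeasure ν]
    (x : Fin d → ℝ) (hmean : ∑ i, μ i (box x) = Fintype.card ι * ν (box x)) :
    ∫ P, localDiscrepancy P x ^ 2 ∂Measure.pi μ ≤
      ∫ P, localDiscrepancy P x ^ 2 ∂Measure.pi fun _ : ι ↦ ν := by
  set N : ℝ := (Fintype.card ι : ℝ)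
  set p : ι → ℝ := fun i ↦ (μ i).real (box x)
  have hmean_real : ∑ i, p i = N * ν.real (box x) := by
    simp only [p, measureReal_def]
    rw [← ENNReal.toReal_sum fun i _ ↦ measure_ne_top _ _, hmean, ENNReal.toReal_mul,
      ENNReal.toReal_natCast]
  have hCS : N * ν.real (box x) ^ 2 ≤ ∑ i, p i ^ 2 := by
    have h := sq_sum_le_card_mul_sum_sq (s := Finset.univ) (f := p)
    rw [hmean_real, Finset.card_univ] at h
    have hN : 0 < N := by positivity
    nlinarith
  rw [integral_localDiscrepancy_sq_pi, integral_localDiscrepancy_sq_pi]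
  simp only [Finset.sum_sub_distrib, Finset.sum_const, Finset.card_univ, nsmul_eq_mul]
  rw [hmean_real]
  gcongr

end Discrepancy

/-- **Partition principle.** For any partition of `[0,1]^d` into `N` measurable sets
of measure `1/N`, the associated jittered sampling set (one independent point chosen
from each `Ω i` according to normalized Lebesgue measure) has expected squared
`L²`-discrepancy at most that of `N` independent uniform points in `[0,1]^d`. -/
theorem partition_principle (d N : ℕ) (hN : 0 < N) (Ω : Fin N → Set (Fin d → ℝ))
    (hmeas : ∀ i, MeasurableSet (Ω i))
    (hvol : ∀ i, volume (Ω i) = 1 / (N : ℝ≥0∞))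
    (hdisj : Pairwise (Function.onFun Disjoint Ω))
    (hcover : ⋃ i, Ω i = unitCube d) :
    ∫ P, L2sq P ∂ Measure.pi (fun i => uMeas (Ω i)) ≤
      ∫ P, L2sq P ∂ Measure.pi (fun _ : Fin N => uMeas (unitCube d)) := by
  have : Nonempty (Fin N) := ⟨⟨0, hN⟩⟩
  simp only [uMeas_eq_cond]
  have : ∀ i, IsProbabilityMeasure (volume[|Ω i]) := fun i ↦
    cond_isProbabilityMeasure_of_finite (by simp [hvol]) (by simp [hvol, hN.ne'])
  have : IsProbabilityMeasure (volume[|unitCube d]) :=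
    cond_isProbabilityMeasure_of_finite (by simp [volume_unitCube]) (by simp [volume_unitCube])
  refine integral_L2sq_mono fun x ↦ integral_localDiscrepancy_sq_pi_le _ _ x ?_
  simpa using sum_cond_apply_eq_card_mul hmeas hdisj hcover (by simp) hvol (measurableSet_box x)
end

section
/- Let $n \in \mathbb{N}$ and let $X_1, \dots, X_d$ be independent real-valued random variables, each satisfying $\mathbb{E}\, e^{t X_j} \le 1 + \sqrt{2\pi}\, \frac{t}{\sqrt{n}}\, \exp\big( \frac{t^2}{8n} \big)$ for every $t > 0$. Let $S_d = X_1 + \dots + X_d$. Then for every $y > 0$, $\mathbb{P}(S_d \ge y) \le \big( 1 + \frac{\sqrt{32 \pi n}}{d}\, y \big)^d \exp\big( -\frac{2 n y^2}{d} \big)$. -/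
open MeasureTheory ProbabilityTheory Real

/-!
Chernoff's bound with the product formula for the moment generating function of an
independent sum gives, for every `t > 0`,
`ℙ(S_d ≥ y) ≤ e^{-ty} ((1 + √(2π) t/√n) e^{t²/(8n)})^d`, using `1 + a e^b ≤ (1 + a) e^b`.
The choice `t = 4ny/d` minimises the Gaussian part `-ty + d t²/(8n)` of the exponent,
which becomes `-2ny²/d`.
-/

theorem one_add_mul_exp_le_mul_exp (a : ℝ) {b : ℝ} (hb : 0 ≤ b) :
    1 + a * exp b ≤ (1 + a) * exp b := by
  rw [add_mul, one_mul]
  gcongr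
  exact one_le_exp hb

theorem ProbabilityTheory.iIndepFun.measureReal_sum_ge_le_of_mgf_le {ι Ω : Type*} [Fintype ι]
    [MeasurableSpace Ω] {μ : Measure Ω} {X : ι → Ω → ℝ} (h_indep : iIndepFun X μ)
    (h_meas : ∀ i, Measurable (X i)) {t : ℝ} (ht : 0 ≤ t)
    (h_int : ∀ i, Integrable (fun ω => exp (t * X i ω)) μ) {M : ℝ}
    (hM : ∀ i, mgf (X i) μ t ≤ M) (y : ℝ) :
    μ.real {ω | y ≤ ∑ i, X i ω} ≤ exp (-t * y) * M ^ Fintype.card ι := by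
  have := h_indep.isProbabilityMeasure
  have h_int_sum : Integrable (fun ω => exp (t * (∑ i, X i) ω)) μ :=
    h_indep.integrable_exp_mul_sum h_meas fun i _ => h_int i
  have h_mgf_sum : mgf (∑ i, X i) μ t ≤ M ^ Fintype.card ι := by
    rw [h_indep.mgf_sum h_meas, ← Finset.card_univ, ← Finset.prod_const]
    exact Finset.prod_le_prod (fun i _ => mgf_nonneg) fun i _ => hM i
  calc μ.real {ω | y ≤ ∑ i, X i ω}
      = μ.real {ω | y ≤ (∑ i, X i) ω} := by simp only [Finset.sum_apply]
    _ ≤ exp (-t * y) * mgf (∑ i, X i) μ t := measure_ge_le_exp_mul_mgf y ht h_int_sum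
    _ ≤ exp (-t * y) * M ^ Fintype.card ι := by gcongr

theorem sqrt_two_pi_mul_div_sqrt (n d y : ℝ) :
    √(2 * π) * (4 * n * y / d / √n) = √(32 * π * n) / d * y := by
  have h32 : √(32 * π * n) = 4 * √(2 * π) * √n := by
    rw [show 32 * π * n = 4 ^ 2 * (2 * π) * n by ring, sqrt_mul (by positivity),
      sqrt_mul (by positivity), sqrt_sq (by norm_num)]
  rw [h32, show 4 * n * y / d / √n = 4 * (n / √n) * y / d by ring, div_sqrt]
  ring

theorem chernoff_exponent_at_optimum {n d y : ℝ} (hn : 0 < n) (hd : 0 < d) :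
    -(4 * n * y / d) * y + d * ((4 * n * y / d) ^ 2 / (8 * n)) = -(2 * n * y ^ 2) / d := by
  field_simp
  ring

/-- **Adapted Bernstein inequality.** Let `X 1, …, X d` be independent real random
variables, each with exponential moments bounded by
`𝔼 exp(t X j) ≤ 1 + √(2π)·(t/√n)·exp(t²/(8n))` for all `t > 0`. Then the sum
`S_d = X 1 + ⋯ + X d` satisfies, for every `y > 0`,
`ℙ(S_d ≥ y) ≤ (1 + (√(32πn)/d)·y)^d · exp(-2ny²/d)`. -/
theorem adapted_bernstein {Ω : Type*} [MeasurableSpace Ω] (μ : Measure Ω)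
    [IsProbabilityMeasure μ] (n : ℕ) (hn : 0 < n) (d : ℕ) (hd : 0 < d)
    (X : Fin d → Ω → ℝ) (hmeas : ∀ j, Measurable (X j))
    (hindep : iIndepFun X μ)
    (hint : ∀ j, ∀ t : ℝ, 0 < t → Integrable (fun ω => Real.exp (t * X j ω)) μ)
    (hmom : ∀ j, ∀ t : ℝ, 0 < t →
      (∫ ω, Real.exp (t * X j ω) ∂μ) ≤
        1 + Real.sqrt (2 * Real.pi) * (t / Real.sqrt n) * Real.exp (t ^ 2 / (8 * n)))
    (y : ℝ) (hy : 0 < y) :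
    μ {ω | y ≤ ∑ j, X j ω} ≤
      ENNReal.ofReal ((1 + Real.sqrt (32 * Real.pi * n) / d * y) ^ d *
        Real.exp (-(2 * n * y ^ 2) / d)) := by
  have hn' : (0 : ℝ) < n := by exact_mod_cast hn
  have hd' : (0 : ℝ) < d := by exact_mod_cast hd
  set t : ℝ := 4 * n * y / d
  have ht : 0 < t := by positivity
  have hmgf : ∀ j, mgf (X j) μ t ≤ (1 + √(32 * π * n) / d * y) * exp (t ^ 2 / (8 * n)) := by
    intro j
    rw [← sqrt_two_pi_mul_div_sqrt]
    exact (hmom j t ht).trans (one_add_mul_exp_le_mul_exp _ (by positivity))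
  have htail := hindep.measureReal_sum_ge_le_of_mgf_le hmeas ht.le (fun j => hint j t ht) hmgf y
  rw [Fintype.card_fin, mul_pow, ← exp_nat_mul, mul_left_comm, ← exp_add,
    chernoff_exponent_at_optimum hn' hd'] at htail
  rw [← ofReal_measureReal]
  exact ENNReal.ofReal_le_ofReal htail
end

section
/- Let $d, m \in \mathbb{N}$, $N = m^d$, and let $\mathcal{P}$ be a jittered sampling point set in $[0,1]^d$ (one point in each cube $\prod_{j=1}^d [\frac{k_j - 1}{m}, \frac{k_j}{m}]$, $\mathbf{k} \in \{1,\dots,m\}^d$). For $\mathbf{x} \in [0,1]^d$ and a string $L \in \{0,1\}^d$, define $A_L(\mathbf{x}) = \{ \mathbf{z} \in [0,\mathbf{x}] : \text{for all } 1 \le i \le d,\ \lfloor m z_i + 1 \rfloor = \lfloor m x_i + 1 \rfloor \text{ iff } L_i = 1 \}$. Then $\#(\mathcal{P} \cap A_L(\mathbf{x})) \le \prod_{j=1}^d \big( \text{if } L_j = 0 \text{ then } \lfloor m x_j + 1 \rfloor \text{ else } 1 \big)$, and consequently $\#(\mathcal{P} \cap A_L(\mathbf{x})) \le m^{d - |L|}$,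 where $|L| = \sum_{i=1}^d L_i$. -/
open MeasureTheory

/-- The cube index `[x] := ⌊mx + 1⌋`, giving the coordinate (in `{1,…,m}`) of the
small cube of side `1/m` containing `x ∈ [0,1)`. -/
noncomputable def cidx (m : ℕ) (x : ℝ) : ℤ := ⌊(m : ℝ) * x + 1⌋

/-- The piece `A_L(x)` of the decomposition of `[0,x]`: points `z ∈ [0,x]` such that
`[z_i] = [x_i]` exactly at the coordinates `i` where `L_i = 1`. -/
def AL {d : ℕ} (m : ℕ) (x : Fin d → ℝ) (L : Fin d → Bool) : Set (Fin d → ℝ) :=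
  {z ∈ box x | ∀ i, (cidx m (z i) = cidx m (x i) ↔ L i = true)}

/-! Since `[·]` is monotone and `z ≤ x` on `[0,x]`, a point of `A_L(x)` in cube `k` has
`k_i = [x_i]` where `L_i = 1` and `k_i < [x_i]` where `L_i = 0`. The counted cubes therefore
form a subset of a product of coordinate sets of sizes at most `1`, respectively
`min(m, [x_i] - 1)`. -/

open Finset

lemma cidx_mono (m : ℕ) : Monotone (cidx m) := fun _ _ h =>
  Int.floor_mono (by gcongr)

lemma cidx_pos (m : ℕ) {x : ℝ} (hx : 0 ≤ x) : 0 < cidx m x := by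
  rw [cidx, Int.floor_pos]
  have : 0 ≤ (m : ℝ) * x := by positivity
  linarith

/-- The `a : Fin m` (cube coordinate `a + 1`) that a point of `A_L(x)` can occupy in a
coordinate `i` with `L i = b` and `[x i] = c`. -/
def compatibleIdx (m : ℕ) (c : ℤ) (b : Bool) : Finset (Fin m) :=
  {a | if b then (a : ℤ) + 1 = c else (a : ℤ) + 1 < c}

lemma card_compatibleIdx_true_le_one (m : ℕ) (c : ℤ) : #(compatibleIdx m c true) ≤ 1 := by
  refine card_le_one.2 fun a ha b hb => ?_
  simp only [compatibleIdx, if_true, mem_filter, mem_univ, true_and] at ha hb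
  exact Fin.ext (by omega)

lemma card_compatibleIdx_false_le (m : ℕ) {c : ℤ} (hc : 0 ≤ c) :
    (#(compatibleIdx m c false) : ℤ) ≤ c := by
  have hsub : (compatibleIdx m c false).map Fin.valEmbedding ⊆ range (c - 1).toNat := by
    intro n hn
    simp only [compatibleIdx, mem_map, mem_filter, mem_univ, true_and] at hn
    obtain ⟨a, ha, rfl⟩ := hn
    simp only [Bool.false_eq_true, if_false] at ha
    simp only [mem_range, Fin.valEmbedding_apply]
    omega
  have := card_le_card hsub
  rw [card_map, card_range] at this
  omega

lemma card_compatibleIdx_le_ite (m : ℕ) {c : ℤ} (hc : 0 ≤ c) (b : Bool) :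
    (#(compatibleIdx m c b) : ℤ) ≤ if b = false then c else 1 := by
  cases b
  · exact card_compatibleIdx_false_le m hc
  · simpa using card_compatibleIdx_true_le_one m c

lemma card_compatibleIdx_le_ite_card (m : ℕ) (c : ℤ) (b : Bool) :
    #(compatibleIdx m c b) ≤ if b = true then 1 else m := by
  cases b
  · simpa using card_le_univ (compatibleIdx m c false)
  · exact card_compatibleIdx_true_le_one m c

lemma mem_compatibleIdx_of_mem_AL {d m : ℕ} {x z : Fin d → ℝ} {L : Fin d → Bool}
    (hz : z ∈ AL m x L) {i : Fin d} {a : Fin m} (ha : cidx m (z i) = (a : ℤ) + 1) :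
    a ∈ compatibleIdx m (cidx m (x i)) (L i) := by
  obtain ⟨hbox, hL⟩ := hz
  have hle : cidx m (z i) ≤ cidx m (x i) := cidx_mono m (hbox i (Set.mem_univ i)).2
  simp only [compatibleIdx, mem_filter, mem_univ, true_and]
  split_ifs with hLi
  · rw [← ha, (hL i).2 hLi]
  · exact ha ▸ lt_of_le_of_ne hle fun h => hLi ((hL i).1 h)

open Classical in
lemma card_filter_mem_AL_le_prod {d m : ℕ} (P : (Fin d → Fin m) → (Fin d → ℝ))
    (hP : ∀ k : Fin d → Fin m, ∀ i, cidx m (P k i) = (k i : ℤ) + 1)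
    (x : Fin d → ℝ) (L : Fin d → Bool) :
    #{q | P q ∈ AL m x L} ≤ ∏ i, #(compatibleIdx m (cidx m (x i)) (L i)) := by
  rw [← Fintype.card_piFinset]
  refine card_le_card fun q hq => Fintype.mem_piFinset.2 fun i => ?_
  exact mem_compatibleIdx_of_mem_AL (mem_filter.1 hq).2 (hP q i)

lemma prod_ite_one_eq_pow {ι M : Type*} [Fintype ι] [CommMonoid M] (p : ι → Prop)
    [DecidablePred p] (a : M) :
    ∏ i, (if p i then 1 else a) = a ^ (Fintype.card ι - #{i | p i}) := by
  rw [prod_ite, prod_const_one, one_mul, prod_const, ← card_univ,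
    ← card_filter_add_card_filter_not (s := univ) p, Nat.add_sub_cancel_left]

open Classical in
theorem count_in_AL_bound_general (d m : ℕ)
    (P : (Fin d → Fin m) → (Fin d → ℝ))
    (hP : ∀ k : Fin d → Fin m, ∀ i, cidx m (P k i) = (k i : ℤ) + 1)
    (x : Fin d → ℝ) (hx : ∀ i, x i ∈ Set.Icc (0:ℝ) 1) (L : Fin d → Bool) :
    (((Finset.univ.filter fun q : Fin d → Fin m => P q ∈ AL m x L).card : ℤ) ≤
        ∏ j, if L j = false then cidx m (x j) else 1) ∧
      (Finset.univ.filter fun q : Fin d → Fin m => P q ∈ AL m x L).card ≤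
        m ^ (d - (Finset.univ.filter fun i => L i = true).card) := by
  have hcount := card_filter_mem_AL_le_prod P hP x L
  constructor
  · calc _ ≤ ∏ i, (#(compatibleIdx m (cidx m (x i)) (L i)) : ℤ) := by exact_mod_cast hcount
      _ ≤ _ := prod_le_prod (fun _ _ => by positivity) fun i _ =>
          card_compatibleIdx_le_ite m (cidx_pos m (hx i).1).le (L i)
  · calc _ ≤ _ := hcount
      _ ≤ ∏ i, if L i = true then 1 else m :=
          prod_le_prod' fun i _ => card_compatibleIdx_le_ite_card m _ (L i)
      _ = _ := by rw [prod_ite_one_eq_pow, Fintype.card_fin]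

open Classical in
/-- **Counting bound for the pieces `A_L(x)`.** If `P` is a jittered sampling point
set (exactly one point with cube index `k` for each `k ∈ {1,…,m}^d`), then for every
`x ∈ [0,1]^d` and every string `L ∈ {0,1}^d`,
`#(𝒫 ∩ A_L(x)) ≤ ∏_j (if L_j = 0 then ⌊m x_j + 1⌋ else 1)`, and consequently
`#(𝒫 ∩ A_L(x)) ≤ m^(d - |L|)`. -/
theorem count_in_AL_bound (d m : ℕ) (hm : 0 < m)
    (P : (Fin d → Fin m) → (Fin d → ℝ))
    (hP : ∀ k : Fin d → Fin m, ∀ i, cidx m (P k i) = (k i : ℤ) + 1)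
    (x : Fin d → ℝ) (hx : ∀ i, x i ∈ Set.Icc (0:ℝ) 1) (L : Fin d → Bool) :
    (((Finset.univ.filter fun q : Fin d → Fin m => P q ∈ AL m x L).card : ℤ) ≤
        ∏ j, if L j = false then cidx m (x j) else 1) ∧
      (Finset.univ.filter fun q : Fin d → Fin m => P q ∈ AL m x L).card ≤
        m ^ (d - (Finset.univ.filter fun i => L i = true).card) :=
  count_in_AL_bound_general d m P hP x hx L
end
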